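/- Assume β·(α+γ) < 4, and for each tax t ∈ ℝ let p_t denote the unique fixed point in [0,1] of the logit map with parameters (α, γ, κ, β, t). Then p_t is strictly decreasing in t: if t₁ < t₂ then p_{t₁} > p_{t₂}. -/

import Mathlib

/-!
Writing `L_t(p) = σ(β(α+γ)p + β(κ - α - t))` with the logistic function `σ`, whose derivative
`σ(1 - σ)` is at most `1/4`, the contraction condition makes `p ↦ L_{t₁}(p) - p` strictly
decreasing. It vanishes at `p₁`, and it is positive at `p₂` because raising the tax lowers `L`:
`L_{t₁}(p₂) > L_{t₂}(p₂) = p₂`. Hence `p₂ < p₁`.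
-/

/-- The logit map with status-quo bias: `L_t(p) = 1/(1 + exp(β(α − κ − p(α+γ) + t)))`. -/
noncomputable def logitMap (α γ κ β t p : ℝ) : ℝ :=
  1 / (1 + Real.exp (β * (α - κ - p * (α + γ) + t)))

open Real Function

lemma Function.IsFixedPt.lt_of_strictAnti_sub {G : Type*} [AddCommGroup G] [LinearOrder G]
    [IsOrderedAddMonoid G] {f g : G → G} {p q : G} (hf : StrictAnti fun x => f x - x)
    (hp : IsFixedPt f p) (hq : IsFixedPt g q) (hgf : g q < f q) : q < p :=
  hf.lt_iff_gt.mp <| by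
    rw [hp.eq, sub_self, sub_pos]
    rwa [hq.eq] at hgf

namespace Real

lemma sigmoid_mul_one_sub_sigmoid_le (x : ℝ) : sigmoid x * (1 - sigmoid x) ≤ 1 / 4 := by
  nlinarith [sq_nonneg (2 * sigmoid x - 1)]

lemma sigmoid_sub_sigmoid_le {x y : ℝ} (hxy : x ≤ y) : sigmoid y - sigmoid x ≤ (y - x) / 4 := by
  have := image_sub_le_mul_sub_of_deriv_le differentiable_sigmoid
    (fun z => by simpa only [deriv_sigmoid] using sigmoid_mul_one_sub_sigmoid_le z) hxy
  linarith

lemma strictAnti_sigmoid_affine_sub {k c : ℝ} (hk₀ : 0 ≤ k) (hk : k < 4) :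
    StrictAnti fun p => sigmoid (k * p + c) - p := by
  intro p q hpq
  have hle := sigmoid_sub_sigmoid_le (show k * p + c ≤ k * q + c by gcongr)
  have : k * (q - p) < 4 * (q - p) := by gcongr
  dsimp only
  linarith

end Real

lemma logitMap_eq_sigmoid (α γ κ β t p : ℝ) :
    logitMap α γ κ β t p = sigmoid (β * (α + γ) * p + β * (κ - α - t)) := by
  rw [logitMap, sigmoid_def, one_div]
  ring_nf

lemma strictAnti_logitMap_tax {β : ℝ} (hβ : 0 < β) (α γ κ p : ℝ) :
    StrictAnti fun t => logitMap α γ κ β t p := by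
  intro t₁ t₂ ht
  simp only [logitMap_eq_sigmoid]
  exact sigmoid_lt (by gcongr)

theorem stmt_3_general (α γ κ β : ℝ) (hα : 0 < α) (hγ : 0 < γ) (hβ : 0 < β)
    (hcontr : β * (α + γ) < 4)
    (t₁ t₂ p₁ p₂ : ℝ) (ht : t₁ < t₂)
    (hfix₁ : logitMap α γ κ β t₁ p₁ = p₁)
    (hfix₂ : logitMap α γ κ β t₂ p₂ = p₂) :
    p₂ < p₁ := by
  have hanti : StrictAnti fun p => logitMap α γ κ β t₁ p - p := by
    simp only [logitMap_eq_sigmoid]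
    exact strictAnti_sigmoid_affine_sub (by positivity) hcontr
  exact IsFixedPt.lt_of_strictAnti_sub hanti hfix₁ hfix₂ (strictAnti_logitMap_tax hβ α γ κ p₂ ht)

/-- Under the contraction condition `β(α+γ) < 4`, the QRE-SB equilibrium probability
`p_t` (the unique fixed point of the logit map in `[0,1]`) is strictly decreasing
in the tax `t`: if `t₁ < t₂` then `p_{t₁} > p_{t₂}`. -/
theorem stmt_3 (α γ κ β : ℝ) (hα : 0 < α) (hγ : 0 < γ) (hκ : 0 ≤ κ) (hβ : 0 < β)
    (hcontr : β * (α + γ) < 4)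
    (t₁ t₂ p₁ p₂ : ℝ) (ht : t₁ < t₂)
    (hp₁ : p₁ ∈ Set.Icc (0 : ℝ) 1) (hfix₁ : logitMap α γ κ β t₁ p₁ = p₁)
    (hp₂ : p₂ ∈ Set.Icc (0 : ℝ) 1) (hfix₂ : logitMap α γ κ β t₂ p₂ = p₂) :
    p₂ < p₁ :=
  stmt_3_general α γ κ β hα hγ hβ hcontr t₁ t₂ p₁ p₂ ht hfix₁ hfix₂
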